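/- In the A₂ τ-function representation (s₁(τ₁) = f₁τ₂/τ₁, s₂(τ₂) = f₂τ₁/τ₂, s_i(τ_j) = τ_j for i ≠ j, with the standard actions on α's and f's), the braid relation s₁s₂s₁ = s₂s₁s₂ holds as automorphisms of ℂ(α₁,α₂,f₁,f₂,τ₁,τ₂). -/

import Mathlib

/-!
Both composites are `ℂ`-algebra endomorphisms of the fraction field of a polynomial ring, so
they agree as soon as they agree on the six generators. On the generators the identities become
transparent in terms of `P = f₁f₂ + α₁` and `Q = f₁f₂ - α₂`: `s₁ f₂ = P / f₁`, `s₂ f₁ = Q / f₂`,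
`s₁` fixes `Q`, `s₂` fixes `P`, and `s₁ P = s₂ Q = f₁f₂`.
-/

/-- The field ℂ(α₁, α₂, f₁, f₂, τ₁, τ₂) of rational functions. -/
noncomputable abbrev K : Type := FractionRing (MvPolynomial (Fin 6) ℂ)

/-- Generators: `gen 0 = α₁`, `gen 1 = α₂`, `gen 2 = f₁`, `gen 3 = f₂`,
`gen 4 = τ₁`, `gen 5 = τ₂`. -/
noncomputable def gen (i : Fin 6) : K :=
  algebraMap (MvPolynomial (Fin 6) ℂ) K (MvPolynomial.X i)

open MvPolynomial

theorem FractionRing.mvPolynomial_algHom_ext {R σ B : Type*} [CommRing R] [Semiring B]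
    [Algebra R B] {f g : FractionRing (MvPolynomial σ R) →ₐ[R] B}
    (h : ∀ i, f (algebraMap (MvPolynomial σ R) _ (X i)) =
      g (algebraMap (MvPolynomial σ R) _ (X i))) :
    f = g :=
  IsLocalization.algHom_ext (nonZeroDivisors _) (MvPolynomial.algHom_ext h)

theorem FractionRing.algebraMap_mvPolynomial_ne_zero {R σ : Type*} [CommRing R]
    {p : MvPolynomial σ R} (v : σ → R) (hp : eval v p ≠ 0) :
    algebraMap _ (FractionRing (MvPolynomial σ R)) p ≠ 0 :=
  (map_ne_zero_iff _ (IsFractionRing.injective _ _)).mpr fun h => hp (by rw [h, map_zero])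

theorem gen_ne_zero (i : Fin 6) : gen i ≠ 0 :=
  (map_ne_zero_iff _ (IsFractionRing.injective _ _)).mpr (X_ne_zero i)

theorem gen2_mul_gen3_add_gen0_ne_zero : gen 2 * gen 3 + gen 0 ≠ 0 := by
  convert FractionRing.algebraMap_mvPolynomial_ne_zero
    (p := (X 2 * X 3 + X 0 : MvPolynomial (Fin 6) ℂ)) (fun j => ((j : ℕ) : ℂ)) (by norm_num)
    using 1
  simp [gen]

theorem gen2_mul_gen3_sub_gen1_ne_zero : gen 2 * gen 3 - gen 1 ≠ 0 := by
  convert FractionRing.algebraMap_mvPolynomial_ne_zero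
    (p := (X 2 * X 3 - X 1 : MvPolynomial (Fin 6) ℂ)) (fun j => ((j : ℕ) : ℂ)) (by norm_num)
    using 1
  simp [gen]

/-- in the A₂ τ-function representation, the braid relation
s₁s₂s₁ = s₂s₁s₂ holds. -/
theorem stmt13 (s₁ s₂ : K ≃ₐ[ℂ] K)
    (h1a1 : s₁ (gen 0) = -gen 0)
    (h1a2 : s₁ (gen 1) = gen 1 + gen 0)
    (h1f1 : s₁ (gen 2) = gen 2)
    (h1f2 : s₁ (gen 3) = gen 3 + gen 0 / gen 2)
    (h1t1 : s₁ (gen 4) = gen 2 * gen 5 / gen 4)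
    (h1t2 : s₁ (gen 5) = gen 5)
    (h2a2 : s₂ (gen 1) = -gen 1)
    (h2a1 : s₂ (gen 0) = gen 0 + gen 1)
    (h2f2 : s₂ (gen 3) = gen 3)
    (h2f1 : s₂ (gen 2) = gen 2 - gen 1 / gen 3)
    (h2t2 : s₂ (gen 5) = gen 3 * gen 4 / gen 5)
    (h2t1 : s₂ (gen 4) = gen 4) :
    ∀ x : K, s₁ (s₂ (s₁ x)) = s₂ (s₁ (s₂ x)) := by
  have h2 := gen_ne_zero 2
  have h3 := gen_ne_zero 3
  have h4 := gen_ne_zero 4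
  have h5 := gen_ne_zero 5
  set P := gen 2 * gen 3 + gen 0 with hP
  set Q := gen 2 * gen 3 - gen 1 with hQ
  have hP0 : P ≠ 0 := gen2_mul_gen3_add_gen0_ne_zero
  have hQ0 : Q ≠ 0 := gen2_mul_gen3_sub_gen1_ne_zero
  have h1f2' : s₁ (gen 3) = P / gen 2 := by rw [h1f2]; field_simp; ring
  have h2f1' : s₂ (gen 2) = Q / gen 3 := by rw [h2f1]; field_simp; ring
  have h1P : s₁ P = gen 2 * gen 3 := by
    simp only [hP, map_add, map_mul, h1f1, h1f2, h1a1]; field_simp; ring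
  have h1Q : s₁ Q = Q := by
    simp only [hQ, map_sub, map_mul, h1f1, h1f2, h1a2]; field_simp; ring
  have h2P : s₂ P = P := by
    simp only [hP, map_add, map_mul, h2f1, h2f2, h2a1]; field_simp; ring
  have h2Q : s₂ Q = gen 2 * gen 3 := by
    simp only [hQ, map_sub, map_mul, h2f1, h2f2, h2a2]; field_simp; ring
  have braid_gen : ∀ i, s₁ (s₂ (s₁ (gen i))) = s₂ (s₁ (s₂ (gen i))) := by
    intro i
    fin_cases i <;>
      simp only [Fin.reduceFinMk, map_neg, map_add, map_mul, map_div₀, h1a1, h1a2, h1f1, h1f2',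
        h1t1, h1t2, h2a1, h2a2, h2f1', h2f2, h2t1, h2t2, h1P, h1Q, h2P, h2Q] <;>
      field_simp <;> ring
  exact AlgHom.congr_fun (FractionRing.mvPolynomial_algHom_ext
    (f := s₁.toAlgHom.comp (s₂.toAlgHom.comp s₁.toAlgHom))
    (g := s₂.toAlgHom.comp (s₁.toAlgHom.comp s₂.toAlgHom)) braid_gen)
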